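/- For every t ≥ 0 and real u with |u| ≤ 1, the probability generating function of the q-iterated GCP satisfies Σ_{n=0}^∞ u^n p^{(q)}(n,t) = G_q∘G_{q−1}∘⋯∘G₁∘G₀(u) evaluated as the nested exponential exp(−Σ_{j_q=1}^{k_q} λ_{q j_q} t (1 − exp(−j_q Σ_{j_{q−1}=1}^{k_{q−1}} λ_{(q−1) j_{q−1}} (1 − ⋯ (1 − exp(−j₁ Σ_{j=1}^k λ_j (1 − u^j))) ⋯ )))), where G₀(u) = exp(−Σ_{j=1}^k λ_j(1−u^j)) and G_i(v) = exp(−Σ_{j_i=1}^{k_i} λ_{i j_i}(1−v^{j_i})) for i = 1,…,q, except that the outermost layer carries the factor t: Σ_n u^n p^{(q)}(n,t) = exp(−Σ_{j_q=1}^{k_q} λ_{q j_q} t (1 − (G_{q−1}∘⋯∘G₀(u))^{j_q})). -/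

import Mathlib

/-- GCP state probabilities: `p(n,t) = ∑_{Ω(k,n)} ∏_j ((λ_j t)^{x_j}/x_j!) e^{−λ_j t}`,
where index `j : Fin k` encodes jump size `j+1`. -/
noncomputable def gcpPmf (k : ℕ) (lam : Fin k → ℝ) (n : ℕ) (t : ℝ) : ℝ :=
  ∑' x : Fin k → ℕ,
    if (∑ j : Fin k, ((j : ℕ) + 1) * x j) = n then
      ∏ j : Fin k, (lam j * t) ^ (x j) / (Nat.factorial (x j)) * Real.exp (-(lam j * t))
    else 0

/-- The probability generating function of a GCP:
`G(u,t) = exp(−∑_j λ_j t (1 − u^j))`. -/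
noncomputable def gcpPgf (k : ℕ) (lam : Fin k → ℝ) (t u : ℝ) : ℝ :=
  Real.exp (-(∑ j : Fin k, lam j * t * (1 - u ^ ((j : ℕ) + 1))))

/-- State probabilities of the iterated GCP obtained from the base GCP (rates `lam`)
by successively time-changing with the GCPs in the list (the head of the list is the
outermost subordinator, the one carrying the time argument):
`p^{(i)}(n,t) = ∑_{m=0}^∞ p^{(i−1)}(n,m) p_i(m,t)`, `p^{(0)} = p`. -/
noncomputable def iterGcpPmf (k : ℕ) (lam : Fin k → ℝ) :
    List ((r : ℕ) × (Fin r → ℝ)) → ℕ → ℝ → ℝ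
  | [], n, t => gcpPmf k lam n t
  | ⟨r, Lr⟩ :: rest, n, t => ∑' m : ℕ, iterGcpPmf k lam rest n m * gcpPmf r Lr m t

/-- The nested-exponential composition of GCP probability generating functions:
the inner layers are evaluated at time `1` and the outermost layer carries the time
factor `t`. -/
noncomputable def nestedGcpPgf (k : ℕ) (lam : Fin k → ℝ) :
    List ((r : ℕ) × (Fin r → ℝ)) → ℝ → ℝ → ℝ
  | [], t, u => gcpPgf k lam t u
  | ⟨r, Lr⟩ :: rest, t, u => gcpPgf r Lr t (nestedGcpPgf k lam rest 1 u)

/-!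
A GCP is a sum of independent Poisson counts with jump sizes `1, …, k`, so the generating
function of `gcpPmf` factorizes into Poisson generating functions and equals `gcpPgf`, for every
real `u`. At an integer time `m` this is the `m`-th power of the generating function at time `1`.
Conditioning the subordinated process on the value `m` of the outer GCP therefore turns its
generating function into the outer one evaluated at the inner one at time `1`; all probabilities
are nonnegative, which justifies exchanging the two summations.
-/

theorem Real.hasSum_pi_prod_of_summable_norm {β : Type*} :
    ∀ {k : ℕ} (f : Fin k → β → ℝ), (∀ j, Summable fun b => ‖f j b‖) →
      HasSum (fun x : Fin k → β => ∏ j, f j (x j)) (∏ j, ∑' b, f j b)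
  | 0, f, _ => by simp
  | k + 1, f, hf => by
    set g : (Fin k → β) → ℝ := fun y => ∏ j : Fin k, f j.succ (y j)
    have hg : HasSum g (∏ j : Fin k, ∑' b, f j.succ b) :=
      hasSum_pi_prod_of_summable_norm _ fun j => hf j.succ
    have hg_norm : Summable fun y => ‖g y‖ := by
      simpa only [g, norm_prod] using
        (hasSum_pi_prod_of_summable_norm (fun (j : Fin k) b => ‖f j.succ b‖)
          fun j => by simpa only [norm_norm] using hf j.succ).summable
    have hcons : (fun x : Fin (k + 1) → β => ∏ j, f j (x j)) ∘ Fin.consEquiv (fun _ => β) =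
        fun p => f 0 p.1 * g p.2 := by
      ext p
      simp [g, Fin.prod_univ_succ, Fin.consEquiv]
    rw [← (Fin.consEquiv fun _ => β).hasSum_iff, hcons, Fin.prod_univ_succ, ← hg.tsum_eq,
      tsum_mul_tsum_of_summable_norm (hf 0) hg_norm]
    exact (summable_mul_of_summable_norm (hf 0) hg_norm).hasSum

theorem hasSum_pow_mul_gcpPmf (k : ℕ) (lam : Fin k → ℝ) (t u : ℝ) :
    HasSum (fun n => u ^ n * gcpPmf k lam n t) (gcpPgf k lam t u) := by
  set deg : (Fin k → ℕ) → ℕ := fun x => ∑ j : Fin k, ((j : ℕ) + 1) * x j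
  set w : (Fin k → ℕ) → ℝ := fun x =>
    ∏ j : Fin k, (lam j * t) ^ (x j) / (Nat.factorial (x j)) * Real.exp (-(lam j * t))
  set f : Fin k → ℕ → ℝ := fun j m =>
    (u ^ ((j : ℕ) + 1) * (lam j * t)) ^ m / (Nat.factorial m) * Real.exp (-(lam j * t))
  have hf_norm (j : Fin k) : Summable fun m => ‖f j m‖ := by
    simpa only [f, norm_mul, norm_div, norm_pow, Real.norm_natCast] using
      (Real.summable_pow_div_factorial ‖u ^ ((j : ℕ) + 1) * (lam j * t)‖).mul_right
        ‖Real.exp (-(lam j * t))‖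
  have hf_sum (j : Fin k) :
      ∑' m, f j m = Real.exp (-(lam j * t * (1 - u ^ ((j : ℕ) + 1)))) := by
    rw [tsum_mul_right, Real.exp_eq_exp_ℝ,
      (NormedSpace.expSeries_div_hasSum_exp (u ^ ((j : ℕ) + 1) * (lam j * t))).tsum_eq,
      ← Real.exp_eq_exp_ℝ, ← Real.exp_add]
    ring_nf
  have hf_prod (x : Fin k → ℕ) : ∏ j, f j (x j) = u ^ deg x * w x := by
    simp only [f, deg, w, ← Finset.prod_pow_eq_pow_sum, ← Finset.prod_mul_distrib]
    refine Finset.prod_congr rfl fun j _ => ?_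
    rw [mul_pow, ← pow_mul]
    ring
  have hpi : HasSum (fun x => u ^ deg x * w x) (gcpPgf k lam t u) := by
    rw [gcpPgf, ← Finset.sum_neg_distrib, Real.exp_sum]
    simpa only [hf_prod, hf_sum] using Real.hasSum_pi_prod_of_summable_norm f hf_norm
  have hfiber (n : ℕ) : ∑' x : deg ⁻¹' {n}, u ^ deg x * w x = u ^ n * gcpPmf k lam n t := by
    rw [tsum_subtype (deg ⁻¹' {n}) fun x => u ^ deg x * w x, gcpPmf, ← tsum_mul_left]
    refine tsum_congr fun x => ?_
    by_cases hx : deg x = n <;> simp [hx, deg, w]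
  simpa only [hfiber] using hpi.tsum_fiberwise deg

theorem gcpPmf_nonneg {k : ℕ} {lam : Fin k → ℝ} (hlam : ∀ j, 0 ≤ lam j) (n : ℕ) {t : ℝ}
    (ht : 0 ≤ t) : 0 ≤ gcpPmf k lam n t := by
  refine tsum_nonneg fun x => ?_
  split_ifs
  · exact Finset.prod_nonneg fun j _ => by have := hlam j; positivity
  · exact le_rfl

theorem gcpPgf_natCast (k : ℕ) (lam : Fin k → ℝ) (m : ℕ) (u : ℝ) :
    gcpPgf k lam m u = gcpPgf k lam 1 u ^ m := by
  simp only [gcpPgf, ← Real.exp_nat_mul, mul_one, mul_neg, Finset.mul_sum]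
  congr 2
  exact Finset.sum_congr rfl fun j _ => by ring

theorem nestedGcpPgf_natCast (k : ℕ) (lam : Fin k → ℝ) (ls : List ((r : ℕ) × (Fin r → ℝ)))
    (m : ℕ) (u : ℝ) : nestedGcpPgf k lam ls m u = nestedGcpPgf k lam ls 1 u ^ m := by
  match ls with
  | [] => exact gcpPgf_natCast k lam m u
  | ⟨r, Lr⟩ :: _ => exact gcpPgf_natCast r Lr m _

/-- `P n m` plays the law at integer time `m` of a process with generating function `φ ^ m`,
and `Q` the law of a subordinator with generating function `ψ`. -/
theorem hasSum_pow_mul_tsum_mul_comp {P : ℕ → ℕ → ℝ} {Q : ℕ → ℝ} {φ ψ : ℝ → ℝ}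
    (hP : ∀ n m, 0 ≤ P n m) (hQ : ∀ m, 0 ≤ Q m)
    (hPφ : ∀ m v, HasSum (fun n => v ^ n * P n m) (φ v ^ m))
    (hQψ : ∀ w, HasSum (fun m => w ^ m * Q m) (ψ w)) (u : ℝ) :
    HasSum (fun n => u ^ n * ∑' m, P n m * Q m) (ψ (φ u)) := by
  have hrow (v : ℝ) (m : ℕ) : HasSum (fun n => v ^ n * (P n m * Q m)) (φ v ^ m * Q m) := by
    simpa only [mul_assoc] using (hPφ m v).mul_right (Q m)
  set G : ℕ × ℕ → ℝ := fun p => u ^ p.2 * (P p.2 p.1 * Q p.1)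
  have hG : Summable G := by
    have hG_norm : (fun p => ‖G p‖) = fun p => |u| ^ p.2 * (P p.2 p.1 * Q p.1) := by
      ext p
      simp [G, abs_of_nonneg (hP _ _), abs_of_nonneg (hQ _)]
    refine Summable.of_norm ?_
    rw [hG_norm, summable_prod_of_nonneg fun p =>
      mul_nonneg (pow_nonneg (abs_nonneg u) _) (mul_nonneg (hP _ _) (hQ _))]
    exact ⟨fun m => (hrow |u| m).summable,
      by simpa only [(hrow |u| _).tsum_eq] using (hQψ (φ |u|)).summable⟩
  have hG_sum : HasSum G (ψ (φ u)) := by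
    convert hG.hasSum using 1
    rw [hG.tsum_prod]
    simp only [G, (hrow u _).tsum_eq, (hQψ (φ u)).tsum_eq]
  refine ((Equiv.prodComm ℕ ℕ).hasSum_iff.2 hG_sum).prod_fiberwise fun n => ?_
  rw [← tsum_mul_left]
  exact ((hG.comp_injective Prod.swap_injective).prod_factor n).hasSum

theorem iterGcpPmf_nonneg {k : ℕ} {lam : Fin k → ℝ} (hlam : ∀ j, 0 ≤ lam j)
    {ls : List ((r : ℕ) × (Fin r → ℝ))} (hls : ∀ s ∈ ls, ∀ j, 0 ≤ s.2 j) (n : ℕ) {t : ℝ}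
    (ht : 0 ≤ t) : 0 ≤ iterGcpPmf k lam ls n t := by
  induction ls generalizing t with
  | nil => exact gcpPmf_nonneg hlam n ht
  | cons s rest ih =>
    obtain ⟨r, Lr⟩ := s
    rw [List.forall_mem_cons] at hls
    exact tsum_nonneg fun m =>
      mul_nonneg (ih hls.2 m.cast_nonneg) (gcpPmf_nonneg hls.1 m ht)

theorem hasSum_pow_mul_iterGcpPmf {k : ℕ} {lam : Fin k → ℝ} (hlam : ∀ j, 0 ≤ lam j)
    {ls : List ((r : ℕ) × (Fin r → ℝ))} (hls : ∀ s ∈ ls, ∀ j, 0 ≤ s.2 j) {t : ℝ}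
    (ht : 0 ≤ t) (u : ℝ) :
    HasSum (fun n => u ^ n * iterGcpPmf k lam ls n t) (nestedGcpPgf k lam ls t u) := by
  induction ls generalizing t u with
  | nil => exact hasSum_pow_mul_gcpPmf k lam t u
  | cons s rest ih =>
    obtain ⟨r, Lr⟩ := s
    rw [List.forall_mem_cons] at hls
    refine hasSum_pow_mul_tsum_mul_comp
      (fun n m => iterGcpPmf_nonneg hlam hls.2 n m.cast_nonneg) (fun m => gcpPmf_nonneg hls.1 m ht)
      (fun m v => ?_) (hasSum_pow_mul_gcpPmf r Lr t) u
    rw [← nestedGcpPgf_natCast]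
    exact ih hls.2 m.cast_nonneg v

theorem iterGcp_pgf_general (k : ℕ) (lam : Fin k → ℝ) (hlam : ∀ j, 0 < lam j)
    (q : ℕ) (K : Fin q → ℕ)
    (L : (i : Fin q) → Fin (K i) → ℝ) (hL : ∀ i j, 0 < L i j)
    (t : ℝ) (ht : 0 ≤ t) (u : ℝ) :
    ∑' n : ℕ, u ^ n *
        iterGcpPmf k lam
          ((List.ofFn fun i : Fin q => (⟨K i, L i⟩ : (r : ℕ) × (Fin r → ℝ)))).reverse n t =
      nestedGcpPgf k lam
        ((List.ofFn fun i : Fin q => (⟨K i, L i⟩ : (r : ℕ) × (Fin r → ℝ)))).reverse t u := by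
  refine (hasSum_pow_mul_iterGcpPmf (fun j => (hlam j).le) ?_ ht u).tsum_eq
  simp only [List.mem_reverse, List.mem_ofFn]
  rintro _ ⟨i, rfl⟩ j
  exact (hL i j).le

/-- the probability generating function of the `q`-iterated GCP is the
nested exponential `G_q∘G_{q−1}∘⋯∘G₁∘G₀(u)`, the outermost layer carrying the factor
`t`. -/
theorem iterGcp_pgf (k : ℕ) (hk : 0 < k) (lam : Fin k → ℝ) (hlam : ∀ j, 0 < lam j)
    (q : ℕ) (hq : 0 < q) (K : Fin q → ℕ) (hK : ∀ i, 0 < K i)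
    (L : (i : Fin q) → Fin (K i) → ℝ) (hL : ∀ i j, 0 < L i j)
    (t : ℝ) (ht : 0 ≤ t) (u : ℝ) (hu : |u| ≤ 1) :
    ∑' n : ℕ, u ^ n *
        iterGcpPmf k lam
          ((List.ofFn fun i : Fin q => (⟨K i, L i⟩ : (r : ℕ) × (Fin r → ℝ)))).reverse n t =
      nestedGcpPgf k lam
        ((List.ofFn fun i : Fin q => (⟨K i, L i⟩ : (r : ℕ) × (Fin r → ℝ)))).reverse t u :=
  iterGcp_pgf_general k lam hlam q K L hL t ht u
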